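/- Let A be an n×n irreducible max-stochastic matrix with nonnegative real entries whose critical graph D^C(A) has at most two strongly connected components, and let w be the maximal RST vector of A. Then for every critical node j ∈ N^C(A), w_j = min_{i ∈ N^C(A)} a*_{ij}, where A* is the Kleene star of A. -/

import Mathlib

open scoped Classical

/-- `T` is an `i`-tree in the digraph on vertex set `V` with edge relation `R`:
every node `j ≠ i` has exactly one outgoing edge in `T`, node `i` has no
outgoing edge in `T`, all edges of `T` are edges of the digraph, and `T`
contains no directed cycle. -/
def IsITree {V : Type*} (R : V → V → Prop) (i : V) (T : Finset (V × V)) : Prop :=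
  (∀ e ∈ T, R e.1 e.2) ∧
  (∀ j : V, j ≠ i → ∃! k : V, (j, k) ∈ T) ∧
  (∀ k : V, (i, k) ∉ T) ∧
  (∀ j : V, ¬ Relation.TransGen (fun a b => (a, b) ∈ T) j j)

/-- Edge relation of the weighted digraph `D(A)`: there is an edge `(a, b)` iff `A a b > 0`. -/
def edgeRel {n : ℕ} (A : Matrix (Fin n) (Fin n) ℝ) : Fin n → Fin n → Prop :=
  fun a b => 0 < A a b

/-- `A` is irreducible: for all `i ≠ j` there is a directed path from `i` to `j` in `D(A)`. -/
def IrreducibleMat {n : ℕ} (A : Matrix (Fin n) (Fin n) ℝ) : Prop :=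
  ∀ i j : Fin n, i ≠ j → Relation.TransGen (edgeRel A) i j

/-- The weight `π(T, A)` of a set `T` of edges: the product of the corresponding entries of `A`. -/
noncomputable def treeWeight {n : ℕ} (A : Matrix (Fin n) (Fin n) ℝ)
    (T : Finset (Fin n × Fin n)) : ℝ :=
  ∏ e ∈ T, A e.1 e.2

/-- The finset `𝒯ᵢ` of all `i`-trees of `D(A)`. -/
noncomputable def iTrees {n : ℕ} (A : Matrix (Fin n) (Fin n) ℝ) (i : Fin n) :
    Finset (Finset (Fin n × Fin n)) :=
  Finset.univ.filter (IsITree (edgeRel A) i)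

/-- `A` is max-stochastic: every row has maximum entry `1`. -/
def MaxStochastic {n : ℕ} (A : Matrix (Fin n) (Fin n) ℝ) : Prop :=
  ∀ i, IsGreatest (Set.range (A i)) 1

/-- `w` is the maximal RST vector of `A`: `w i` is the maximum of the weights of
the `i`-trees of `D(A)`. -/
def IsMaxRSTVector {n : ℕ} (A : Matrix (Fin n) (Fin n) ℝ) (w : Fin n → ℝ) : Prop :=
  ∀ i, IsGreatest {x | ∃ T, IsITree (edgeRel A) i T ∧ x = treeWeight A T} (w i)

/-- The edges of the closed walk determined by the list of vertices `c`
(consecutive edges together with the wrap-around edge). -/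
def cycleEdges {n : ℕ} (c : List (Fin n)) : List (Fin n × Fin n) :=
  c.zip (c.rotate 1)

/-- `c` is a directed cycle in `D(A)`. -/
def IsCycleIn {n : ℕ} (A : Matrix (Fin n) (Fin n) ℝ) (c : List (Fin n)) : Prop :=
  c ≠ [] ∧ ∀ e ∈ cycleEdges c, 0 < A e.1 e.2

/-- The geometric mean of the edge weights of the cycle `c`: the `k`-th root of
the product of the weights, where `k` is the length of the cycle. -/
noncomputable def cycleGeoMean {n : ℕ} (A : Matrix (Fin n) (Fin n) ℝ)
    (c : List (Fin n)) : ℝ :=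
  (((cycleEdges c).map fun e => A e.1 e.2).prod) ^ ((c.length : ℝ)⁻¹)

/-- `i` is a critical node of `A` (with `μ(A) = 1`): `i` lies on a cycle whose
geometric mean is `1 = μ(A)`. -/
def CriticalNode {n : ℕ} (A : Matrix (Fin n) (Fin n) ℝ) (i : Fin n) : Prop :=
  ∃ c, IsCycleIn A c ∧ cycleGeoMean A c = 1 ∧ i ∈ c

/-- `(a, b)` is a critical edge of `A` (with `μ(A) = 1`): it lies on a cycle whose
geometric mean is `1 = μ(A)`. -/
def CriticalEdge {n : ℕ} (A : Matrix (Fin n) (Fin n) ℝ) (a b : Fin n) : Prop :=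
  ∃ c, IsCycleIn A c ∧ cycleGeoMean A c = 1 ∧ (a, b) ∈ cycleEdges c

/-- `i` and `j` lie in the same strongly connected component of the critical
graph `D^C(A)`. -/
def SameCritComponent {n : ℕ} (A : Matrix (Fin n) (Fin n) ℝ) (i j : Fin n) : Prop :=
  Relation.ReflTransGen (CriticalEdge A) i j ∧ Relation.ReflTransGen (CriticalEdge A) j i

/-- The consecutive edges of the walk determined by the list of vertices `P`. -/
def pathEdges {n : ℕ} (P : List (Fin n)) : List (Fin n × Fin n) :=
  P.zip P.tail

/-- The weight of a path: the product of its edge weights. -/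
noncomputable def pathWeight {n : ℕ} (A : Matrix (Fin n) (Fin n) ℝ)
    (P : List (Fin n)) : ℝ :=
  ((pathEdges P).map fun e => A e.1 e.2).prod

/-- `P` is a directed path in `D(A)` from `i` to `j`. -/
def IsPathIn {n : ℕ} (A : Matrix (Fin n) (Fin n) ℝ) (i j : Fin n)
    (P : List (Fin n)) : Prop :=
  P.head? = some i ∧ P.getLast? = some j ∧ 2 ≤ P.length ∧
  ∀ e ∈ pathEdges P, 0 < A e.1 e.2

/-- `S` is the Kleene star `A*` of `A`: `S i i = 1`, and for `i ≠ j`, `S i j` is the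
maximum weight of a directed path from `i` to `j` in `D(A)` (and `0` if there is none). -/
def IsKleeneStar {n : ℕ} (A S : Matrix (Fin n) (Fin n) ℝ) : Prop :=
  (∀ i, S i i = 1) ∧
  ∀ i j, i ≠ j →
    S i j = sSup (insert (0 : ℝ) {x | ∃ P, IsPathIn A i j P ∧ x = pathWeight A P})

/-- `A` is `p`-stochastic: `∑ⱼ aᵢⱼᵖ = 1` for every row `i`. -/
def PStochastic {n : ℕ} (A : Matrix (Fin n) (Fin n) ℝ) (p : ℕ) : Prop :=
  ∀ i, ∑ j, A i j ^ p = 1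

section Helpers

variable {n : ℕ}

lemma list_prod_le_one (l : List ℝ) (h : ∀ x ∈ l, 0 ≤ x ∧ x ≤ 1) : l.prod ≤ 1 := by
  induction l with
  | nil => simp
  | cons x t ih =>
    have hx := h x (by simp)
    have ht : t.prod ≤ 1 := ih fun y hy => h y (by simp [hy])
    have htn : 0 ≤ t.prod := List.prod_nonneg fun y hy => (h y (by simp [hy])).1
    calc (x :: t).prod = x * t.prod := List.prod_cons
      _ ≤ 1 * 1 := mul_le_mul hx.2 ht htn zero_le_one
      _ = 1 := by ring

lemma list_prod_eq_one_mem (l : List ℝ) (h : ∀ x ∈ l, 0 < x ∧ x ≤ 1)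
    (hp : l.prod = 1) : ∀ x ∈ l, x = 1 := by
  induction l with
  | nil => simp
  | cons x t ih =>
    have hx := h x (by simp)
    have htpos : 0 < t.prod := List.prod_pos fun y hy => (h y (by simp [hy])).1
    have ht1 : t.prod ≤ 1 := list_prod_le_one t fun y hy =>
      ⟨(h y (by simp [hy])).1.le, (h y (by simp [hy])).2⟩
    have hxt : x * t.prod = 1 := by rw [← List.prod_cons]; exact hp
    have hx1 : x = 1 := by nlinarith [hx.1, hx.2]
    have htp : t.prod = 1 := by nlinarith
    intro y hy
    rcases List.mem_cons.1 hy with rfl | hy'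
    · exact hx1
    · exact ih (fun z hz => h z (by simp [hz])) htp y hy'

lemma pathEdges_cons_cons (x y : Fin n) (t : List (Fin n)) :
    pathEdges (x :: y :: t) = (x, y) :: pathEdges (y :: t) := rfl

lemma pathEdges_append (u : List (Fin n)) (v : Fin n) (t : List (Fin n)) :
    pathEdges (u ++ v :: t) = pathEdges (u ++ [v]) ++ pathEdges (v :: t) := by
  induction u with
  | nil => simp [pathEdges]
  | cons x u' ih =>
    cases u' with
    | nil => simp [pathEdges_cons_cons, pathEdges]
    | cons y u'' =>
      have : x :: (y :: u'') ++ v :: t = x :: ((y :: u'') ++ v :: t) := rfl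
      rw [this]
      have h2 : (y :: u'') ++ v :: t = y :: (u'' ++ v :: t) := rfl
      rw [h2, pathEdges_cons_cons, ← h2, ih]
      rfl

lemma pathWeight_append (A : Matrix (Fin n) (Fin n) ℝ) (u : List (Fin n)) (v : Fin n)
    (t : List (Fin n)) :
    pathWeight A (u ++ v :: t) = pathWeight A (u ++ [v]) * pathWeight A (v :: t) := by
  unfold pathWeight
  rw [pathEdges_append, List.map_append, List.prod_append]

lemma map_fst_zip_take {α β : Type*} : ∀ (a : List α) (b : List β),
    (a.zip b).map Prod.fst = a.take b.length
  | [], _ => by simp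
  | _ :: _, [] => by simp
  | x :: a, y :: b => by simp [map_fst_zip_take a b]

lemma pathEdges_map_fst (P : List (Fin n)) : (pathEdges P).map Prod.fst = P.dropLast := by
  rw [pathEdges, map_fst_zip_take, List.length_tail, ← List.dropLast_eq_take]

lemma pathEdges_nodup {P : List (Fin n)} (h : P.Nodup) : (pathEdges P).Nodup := by
  have := h.sublist P.dropLast_sublist
  rw [← pathEdges_map_fst] at this
  exact this.of_map _

lemma cycleEdges_mem {c : List (Fin n)} {e : Fin n × Fin n} (h : e ∈ cycleEdges c) :
    ∃ k, ∃ hk : k < c.length,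
      e.1 = c.get ⟨k, hk⟩ ∧
      e.2 = c.get ⟨(k + 1) % c.length, Nat.mod_lt _ (by omega)⟩ := by
  unfold cycleEdges at h
  rw [List.mem_iff_getElem] at h
  obtain ⟨m, hm, he⟩ := h
  have hlen : (c.zip (c.rotate 1)).length = c.length := by
    simp [List.length_zip, List.length_rotate]
  rw [hlen] at hm
  refine ⟨m, hm, ?_, ?_⟩ <;>
    simp only [List.get_eq_getElem, ← he, List.getElem_zip, List.getElem_rotate]

lemma entry_le_one {A : Matrix (Fin n) (Fin n) ℝ} (hms : MaxStochastic A) (i j : Fin n) :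
    A i j ≤ 1 := (hms i).2 ⟨j, rfl⟩

lemma criticalEdge_weight_one {A : Matrix (Fin n) (Fin n) ℝ} (hms : MaxStochastic A)
    {a b : Fin n} (h : CriticalEdge A a b) : A a b = 1 := by
  obtain ⟨c, hc, hg, hmem⟩ := h
  set l : List ℝ := (cycleEdges c).map fun e => A e.1 e.2 with hl
  have hlb : ∀ x ∈ l, 0 < x ∧ x ≤ 1 := by
    rintro x hx
    rw [hl, List.mem_map] at hx
    obtain ⟨e, he, rfl⟩ := hx
    exact ⟨hc.2 e he, entry_le_one hms e.1 e.2⟩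
  have hpos : 0 < l.prod := List.prod_pos fun x hx => (hlb x hx).1
  have hlen : (0:ℕ) < c.length := List.length_pos_iff.2 hc.1
  have hp1 : l.prod = 1 := by
    have h2 : (l.prod ^ ((c.length : ℝ)⁻¹)) ^ (c.length : ℝ) = 1 := by
      rw [cycleGeoMean] at hg; rw [hg]; exact Real.one_rpow _
    rwa [← Real.rpow_mul hpos.le, inv_mul_cancel₀ (by positivity), Real.rpow_one] at h2
  exact list_prod_eq_one_mem l hlb hp1 _ (List.mem_map_of_mem hmem)

lemma sameCrit_one_path {A : Matrix (Fin n) (Fin n) ℝ} (hms : MaxStochastic A)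
    {i j : Fin n} (h : Relation.ReflTransGen (CriticalEdge A) i j) :
    Relation.ReflTransGen (fun a b => A a b = 1) i j :=
  Relation.ReflTransGen.mono (fun _ _ hab => criticalEdge_weight_one hms hab) _ _ h

lemma reach_critical {A : Matrix (Fin n) (Fin n) ℝ} (hms : MaxStochastic A) (i : Fin n) :
    ∃ v, CriticalNode A v ∧ Relation.ReflTransGen (fun a b => A a b = 1) i v := by
  have hg' : ∀ k : Fin n, ∃ x, A k x = 1 := fun k => (hms k).1
  choose g hg using hg'
  have hreach : ∀ (x : Fin n) (m : ℕ),
      Relation.ReflTransGen (fun a b => A a b = 1) x (g^[m] x) := by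
    intro x m
    induction m with
    | zero => exact Relation.ReflTransGen.refl
    | succ m ih =>
      refine ih.tail ?_
      rw [Function.iterate_succ_apply']
      exact hg _
  obtain ⟨x, y, hxy, hfe⟩ :=
    Fintype.exists_ne_map_eq_of_card_lt (fun t : Fin (n + 1) => g^[(t : ℕ)] i) (by simp)
  obtain ⟨a, b, hab, hper0⟩ : ∃ a b : ℕ, a < b ∧ g^[a] i = g^[b] i := by
    rcases lt_or_gt_of_ne (fun h : (x:ℕ) = (y:ℕ) => hxy (Fin.ext h)) with h | h
    · exact ⟨x, y, h, hfe⟩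
    · exact ⟨y, x, h, hfe.symm⟩
  set v := g^[a] i with hv
  set L := b - a with hL
  have hLpos : 0 < L := by omega
  have hperiod : g^[L] v = v := by
    rw [hv, ← Function.iterate_add_apply]
    have hLa : L + a = b := by omega
    rw [hLa, ← hper0]
  set c : List (Fin n) := (List.range L).map (fun t => g^[t] v) with hc
  have hclen : c.length = L := by simp [hc]
  have hcne : c ≠ [] := by
    intro h
    rw [h] at hclen
    simp at hclen
    omega
  have hcget : ∀ (k : ℕ) (hk : k < c.length), c.get ⟨k, hk⟩ = g^[k] v := by
    intro k hk
    simp [hc]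
  have hedge : ∀ e ∈ cycleEdges c, A e.1 e.2 = 1 := by
    intro e he
    obtain ⟨k, hk, h1, h2⟩ := cycleEdges_mem he
    have hk2 : (k + 1) % c.length < c.length := Nat.mod_lt _ (by omega)
    have h2' : e.2 = g (g^[k] v) := by
      rw [h2, hcget _ hk2]
      rcases Nat.lt_or_ge (k + 1) c.length with hlt | hge
      · rw [Nat.mod_eq_of_lt hlt, Function.iterate_succ_apply']
      · have heq : k + 1 = c.length := by omega
        have hgv : g (g^[k] v) = v := by
          have h3 : g^[k + 1] v = v := by rw [heq, hclen]; exact hperiod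
          simpa [Function.iterate_succ_apply'] using h3
        rw [heq, Nat.mod_self, Function.iterate_zero_apply, hgv]
    rw [h1, hcget _ hk, h2']
    exact hg _
  refine ⟨v, ⟨c, ⟨hcne, fun e he => by rw [hedge e he]; norm_num⟩, ?_, ?_⟩, hreach i a⟩
  · rw [cycleGeoMean]
    have hp : ((cycleEdges c).map fun e => A e.1 e.2).prod = 1 :=
      List.prod_eq_one fun x hx => by
        rw [List.mem_map] at hx
        obtain ⟨e, he, rfl⟩ := hx
        exact hedge e he
    rw [hp, Real.one_rpow]
  · rw [hc]
    refine List.mem_map.2 ⟨0, ?_, rfl⟩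
    simp [hLpos]

lemma mem_of_getLast?_eq {α : Type*} {l : List α} {j : α} (h : l.getLast? = some j) :
    j ∈ l := by
  have hne : l ≠ [] := by intro h0; rw [h0] at h; simp at h
  have h2 := List.getLast?_eq_getLast hne
  rw [h2, Option.some_inj] at h
  rw [← h]
  exact List.getLast_mem hne

lemma getLast?_ne_nil {α : Type*} {l : List α} {j : α} (h : l.getLast? = some j) :
    l ≠ [] := by
  intro h0; rw [h0] at h; simp at h

lemma get_of_getLast?_eq {α : Type*} {l : List α} {j : α} (h : l.getLast? = some j)
    (hl : l.length - 1 < l.length) : l.get ⟨l.length - 1, hl⟩ = j := by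
  have hne : l ≠ [] := getLast?_ne_nil h
  have h2 := List.getLast?_eq_getLast hne
  rw [h2, Option.some_inj] at h
  rw [← h, List.getLast_eq_getElem]
  simp

lemma pathEdges_length (P : List (Fin n)) : (pathEdges P).length = P.length - 1 := by
  rw [pathEdges, List.length_zip, List.length_tail]
  omega

lemma pathEdges_get (P : List (Fin n)) (m : ℕ) (hm : m < P.length - 1) :
    (pathEdges P).get ⟨m, by rw [pathEdges_length]; omega⟩ =
      (P.get ⟨m, by omega⟩, P.get ⟨m + 1, by omega⟩) := by
  simp only [pathEdges, List.get_eq_getElem, List.getElem_zip, List.getElem_tail]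

lemma pathEdges_mem {P : List (Fin n)} {e : Fin n × Fin n} (h : e ∈ pathEdges P) :
    ∃ m, ∃ hm : m < P.length - 1,
      e.1 = P.get ⟨m, by omega⟩ ∧ e.2 = P.get ⟨m + 1, by omega⟩ := by
  rw [List.mem_iff_getElem] at h
  obtain ⟨m, hm, he⟩ := h
  rw [pathEdges_length] at hm
  refine ⟨m, hm, ?_, ?_⟩ <;>
  · have h2 := pathEdges_get P m hm
    simp only [List.get_eq_getElem] at h2
    simp [List.get_eq_getElem, ← he, h2]

lemma pathEdges_mem_of_get {P : List (Fin n)} {m : ℕ} (hm : m < P.length - 1) :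
    (P.get ⟨m, by omega⟩, P.get ⟨m + 1, by omega⟩) ∈ pathEdges P := by
  rw [← pathEdges_get P m hm]
  exact List.get_mem _ _

lemma build_tree_of_fun (A : Matrix (Fin n) (Fin n) ℝ) (j : Fin n)
    (f : Fin n → Fin n) (r : Fin n → ℕ)
    (hf : ∀ k, k ≠ j → 0 < A k (f k) ∧ r (f k) < r k) :
    IsITree (edgeRel A) j ((Finset.univ.erase j).image fun k => (k, f k)) ∧
    treeWeight A ((Finset.univ.erase j).image fun k => (k, f k)) =
      ∏ k ∈ Finset.univ.erase j, A k (f k) := by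
  set T := (Finset.univ.erase j).image fun k => (k, f k) with hT
  have hmem : ∀ p : Fin n × Fin n, p ∈ T ↔ p.1 ≠ j ∧ p.2 = f p.1 := by
    intro p
    rw [hT, Finset.mem_image]
    constructor
    · rintro ⟨k, hk, rfl⟩
      exact ⟨(Finset.mem_erase.1 hk).1, rfl⟩
    · rintro ⟨h1, h2⟩
      exact ⟨p.1, Finset.mem_erase.2 ⟨h1, Finset.mem_univ _⟩, by rw [← h2]⟩
  have hstep : ∀ a b : Fin n, (a, b) ∈ T → r b < r a := by
    intro a b hab
    obtain ⟨h1, h2⟩ := (hmem (a, b)).1 hab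
    simp only at h1 h2
    rw [h2]
    exact (hf a h1).2
  refine ⟨⟨?_, ?_, ?_, ?_⟩, ?_⟩
  · intro e he
    obtain ⟨h1, h2⟩ := (hmem e).1 he
    rw [edgeRel, h2]
    exact (hf e.1 h1).1
  · intro k hk
    refine ⟨f k, (hmem (k, f k)).2 ⟨hk, rfl⟩, ?_⟩
    intro y hy
    exact ((hmem (k, y)).1 hy).2
  · intro k hk
    exact (((hmem (j, k)).1 hk).1) rfl
  · intro k hk
    have : ∀ a b : Fin n, Relation.TransGen (fun a b => (a, b) ∈ T) a b → r b < r a := by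
      intro a b h
      induction h with
      | single h1 => exact hstep _ _ h1
      | tail h1 h2 ih => exact lt_trans (hstep _ _ h2) ih
    exact lt_irrefl _ (this k k hk)
  · rw [treeWeight, hT, Finset.prod_image]
    intro a _ b _ hab
    exact congrArg Prod.fst hab

lemma prod_path_nodes (A : Matrix (Fin n) (Fin n) ℝ) (j : Fin n) (f : Fin n → Fin n) :
    ∀ P : List (Fin n), P.Nodup → P.getLast? = some j →
      (∀ e ∈ pathEdges P, f e.1 = e.2) →
      ∏ k ∈ P.toFinset.erase j, A k (f k) = pathWeight A P := by
  intro P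
  induction P with
  | nil => intro _ hlast; simp at hlast
  | cons x t ih =>
    intro hnd hlast hedge
    cases t with
    | nil =>
      simp only [List.getLast?_singleton, Option.some_inj] at hlast
      subst hlast
      simp [pathWeight, pathEdges]
    | cons y t' =>
      have hxt : x ∉ y :: t' := (List.nodup_cons.1 hnd).1
      have hnd' : (y :: t').Nodup := (List.nodup_cons.1 hnd).2
      have hlast' : (y :: t').getLast? = some j := by
        rwa [List.getLast?_cons_cons] at hlast
      have hj : j ∈ y :: t' := mem_of_getLast?_eq hlast'
      have hxj : x ≠ j := fun h => hxt (h ▸ hj)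
      have hsplit : ((x :: y :: t').toFinset.erase j) =
          insert x ((y :: t').toFinset.erase j) := by
        rw [List.toFinset_cons, Finset.erase_insert_of_ne hxj]
      rw [hsplit, Finset.prod_insert (by
        intro hmem
        exact hxt (List.mem_toFinset.1 (Finset.mem_of_mem_erase hmem)))]
      have hfx : f x = y := hedge (x, y) (by rw [pathEdges_cons_cons]; exact List.mem_cons_self)
      have hrest := ih hnd' hlast' (fun e he => hedge e (by rw [pathEdges_cons_cons]; exact List.mem_cons_of_mem _ he))
      rw [hrest, hfx]
      show A x y * pathWeight A (y :: t') = pathWeight A (x :: y :: t')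
      simp only [pathWeight]
      rw [pathEdges_cons_cons, List.map_cons, List.prod_cons]

def iterRel {V : Type*} (r : V → V → Prop) : ℕ → V → V → Prop
  | 0 => Eq
  | m + 1 => fun a b => ∃ c, r a c ∧ iterRel r m c b

lemma iterRel_tail {V : Type*} {r : V → V → Prop} :
    ∀ {m : ℕ} {a b c : V}, iterRel r m a b → r b c → iterRel r (m + 1) a c := by
  intro m
  induction m with
  | zero =>
    rintro a b c rfl h
    exact ⟨c, h, rfl⟩
  | succ m ih =>
    rintro a b c ⟨d, had, hd⟩ h
    exact ⟨d, had, ih hd h⟩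

lemma exists_iterRel_of_rtg {V : Type*} {r : V → V → Prop} {a b : V}
    (h : Relation.ReflTransGen r a b) : ∃ m, iterRel r m a b := by
  induction h with
  | refl => exact ⟨0, rfl⟩
  | tail _ hbc ih =>
    obtain ⟨m, hm⟩ := ih
    exact ⟨m + 1, iterRel_tail hm hbc⟩

lemma exists_tree_of_path (A : Matrix (Fin n) (Fin n) ℝ)
    {j : Fin n} (P : List (Fin n)) (hnd : P.Nodup) (hlast : P.getLast? = some j)
    (hpos : ∀ e ∈ pathEdges P, 0 < A e.1 e.2)
    (hroute : ∀ k : Fin n, ∃ v ∈ P, Relation.ReflTransGen (fun a b => A a b = 1) k v) :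
    ∃ T, IsITree (edgeRel A) j T ∧ treeWeight A T = pathWeight A P := by
  classical
  have hPne : P ≠ [] := getLast?_ne_nil hlast
  have hPlen : 0 < P.length := List.length_pos_iff.2 hPne
  have hjP : j ∈ P := mem_of_getLast?_eq hlast
  set E1 : Fin n → Fin n → Prop := fun a b => A a b = 1 with hE1
  have hQ : ∀ k : Fin n, ∃ m, ∃ v ∈ P, iterRel E1 m k v := by
    intro k
    obtain ⟨v, hv, hr⟩ := hroute k
    obtain ⟨m, hm⟩ := exists_iterRel_of_rtg hr
    exact ⟨m, v, hv, hm⟩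
  set d : Fin n → ℕ := fun k => Nat.find (hQ k) with hd
  have hdpos : ∀ k, k ∉ P → 0 < d k := by
    intro k hk
    rcases Nat.eq_zero_or_pos (d k) with h | h
    · exfalso
      have hsp := Nat.find_spec (hQ k)
      have h' : Nat.find (hQ k) = 0 := h
      rw [h'] at hsp
      obtain ⟨v, hv, hit⟩ := hsp
      exact hk (hit ▸ hv)
    · exact h
  have hsucc : ∀ k, k ∉ P → ∃ c, A k c = 1 ∧ d c < d k := by
    intro k hk
    have hspec := Nat.find_spec (hQ k)
    have h1 : 0 < d k := hdpos k hk
    obtain ⟨v, hv, hit⟩ := hspec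
    have heq : Nat.find (hQ k) = (d k - 1) + 1 := by
      have h2 : d k = d k - 1 + 1 := by omega
      exact h2
    rw [heq] at hit
    obtain ⟨c, hkc, hit'⟩ := hit
    refine ⟨c, hkc, ?_⟩
    have : d c ≤ d k - 1 := Nat.find_min' (hQ c) ⟨v, hv, hit'⟩
    omega
  choose nxt hnxt1 hnxt2 using hsucc
  have hidxlt : ∀ k (hk : k ∈ P), k ≠ j → P.idxOf k + 1 < P.length := by
    intro k hk hkj
    have h1 : P.idxOf k < P.length := List.idxOf_lt_length_iff.2 hk
    rcases Nat.lt_or_ge (P.idxOf k + 1) P.length with h | h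
    · exact h
    · exfalso
      have h2 : P.idxOf k = P.length - 1 := by omega
      have h3 : P.get ⟨P.idxOf k, h1⟩ = k := by
        simp [List.get_eq_getElem, List.getElem_idxOf]
      have h4 : P.get ⟨P.length - 1, by omega⟩ = j := get_of_getLast?_eq hlast (by omega)
      apply hkj
      rw [← h3]
      simp_rw [h2]
      exact h4
  set f : Fin n → Fin n := fun k =>
    if hk : k ∈ P then
      (if hkj : k = j then k else P.get ⟨P.idxOf k + 1, hidxlt k hk hkj⟩)
    else nxt k (by assumption) with hfdef
  set r : Fin n → ℕ := fun k =>
    if k ∈ P then (P.length - 1) - P.idxOf k else P.length + d k with hrdef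
  have hrP : ∀ k, k ∈ P → r k ≤ P.length - 1 := by
    intro k hk
    rw [hrdef]
    simp only [if_pos hk]
    omega
  have hf : ∀ k, k ≠ j → 0 < A k (f k) ∧ r (f k) < r k := by
    intro k hkj
    by_cases hk : k ∈ P
    · have hlt := hidxlt k hk hkj
      have hfk : f k = P.get ⟨P.idxOf k + 1, hlt⟩ := by
        rw [hfdef]; simp only [dif_pos hk, dif_neg hkj]
      have hidx : P.idxOf k < P.length := List.idxOf_lt_length_iff.2 hk
      have hkget : P.get ⟨P.idxOf k, hidx⟩ = k := by
        simp [List.get_eq_getElem, List.getElem_idxOf]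
      have hedge : (k, f k) ∈ pathEdges P := by
        have hm : P.idxOf k < P.length - 1 := by omega
        have h5 := pathEdges_mem_of_get (P := P) hm
        rw [hkget] at h5
        rw [hfk]
        exact h5
      have hfkP : f k ∈ P := by
        rw [hfk]; exact List.get_mem _ _
      have hfkidx : P.idxOf (f k) = P.idxOf k + 1 := by
        rw [hfk]
        simp only [List.get_eq_getElem]
        exact List.Nodup.idxOf_getElem hnd _ _
      constructor
      · exact hpos _ hedge
      · rw [hrdef]
        simp only [if_pos hk, if_pos hfkP, hfkidx]
        omega
    · have hfk : f k = nxt k hk := by rw [hfdef]; simp only [dif_neg hk]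
      constructor
      · rw [hfk, hnxt1 k hk]; norm_num
      · rw [hrdef]
        by_cases hfkP : f k ∈ P
        · simp only [if_pos hfkP, if_neg hk]
          have := hdpos k hk
          omega
        · simp only [if_neg hfkP, if_neg hk]
          have h2 : d (f k) < d k := by rw [hfk]; exact hnxt2 k hk
          omega
  obtain ⟨htree, hweight⟩ := build_tree_of_fun A j f r hf
  refine ⟨_, htree, ?_⟩
  rw [hweight]
  have hsub : P.toFinset.erase j ⊆ Finset.univ.erase j := by
    intro x hx
    exact Finset.mem_erase.2 ⟨(Finset.mem_erase.1 hx).1, Finset.mem_univ _⟩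
  have hone : ∀ x ∈ Finset.univ.erase j, x ∉ P.toFinset.erase j → A x (f x) = 1 := by
    intro x hx hnx
    have hxj : x ≠ j := (Finset.mem_erase.1 hx).1
    have hxP : x ∉ P := by
      intro hmem
      exact hnx (Finset.mem_erase.2 ⟨hxj, List.mem_toFinset.2 hmem⟩)
    have hfx : f x = nxt x hxP := by rw [hfdef]; simp only [dif_neg hxP]
    rw [hfx]
    exact hnxt1 x hxP
  rw [← Finset.prod_subset hsub hone]
  refine prod_path_nodes A j f P hnd hlast ?_
  intro e he
  obtain ⟨m, hm, he1, he2⟩ := pathEdges_mem he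
  have he1P : e.1 ∈ P := by rw [he1]; exact List.get_mem _ _
  have hidx1 : P.idxOf e.1 = m := by
    rw [he1]
    simp only [List.get_eq_getElem]
    exact List.Nodup.idxOf_getElem hnd _ _
  have he1j : e.1 ≠ j := by
    intro h
    have h4 : P.get ⟨P.length - 1, by omega⟩ = j := get_of_getLast?_eq hlast (by omega)
    have : P.idxOf j = P.length - 1 := by
      rw [← h4]
      simp only [List.get_eq_getElem]
      exact List.Nodup.idxOf_getElem hnd _ _
    rw [h] at hidx1
    omega
  have hfe : f e.1 = P.get ⟨P.idxOf e.1 + 1, hidxlt e.1 he1P he1j⟩ := by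
    rw [hfdef]; simp only [dif_pos he1P, dif_neg he1j]
  rw [hfe, he2]
  congr 1
  simp_rw [hidx1]


lemma treeWeight_nonneg {A : Matrix (Fin n) (Fin n) ℝ} (hnn : ∀ i j, 0 ≤ A i j)
    (T : Finset (Fin n × Fin n)) : 0 ≤ treeWeight A T :=
  Finset.prod_nonneg fun e _ => hnn e.1 e.2

lemma treeWeight_le_one {A : Matrix (Fin n) (Fin n) ℝ} (hnn : ∀ i j, 0 ≤ A i j)
    (hms : MaxStochastic A) (T : Finset (Fin n × Fin n)) : treeWeight A T ≤ 1 :=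
  Finset.prod_le_one (fun e _ => hnn e.1 e.2) (fun e _ => entry_le_one hms e.1 e.2)

lemma tree_path {A : Matrix (Fin n) (Fin n) ℝ} {j : Fin n} {T : Finset (Fin n × Fin n)}
    (hT : IsITree (edgeRel A) j T) (i : Fin n) :
    ∃ P : List (Fin n), P.head? = some i ∧ P.getLast? = some j ∧ P.Nodup ∧
      (∀ e ∈ pathEdges P, e ∈ T) := by
  classical
  set step : Fin n → Fin n → Prop := fun a b => (a, b) ∈ T with hstep
  set rel : Fin n → Fin n → Prop := fun x y => Relation.TransGen step y x with hrel
  have hwf : WellFounded rel := by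
    have htr : IsTrans (Fin n) rel := ⟨fun x y z h1 h2 => Relation.TransGen.trans h2 h1⟩
    have hir : IsIrrefl (Fin n) rel := ⟨fun x h => hT.2.2.2 x h⟩
    exact Finite.wellFounded_of_trans_of_irrefl rel
  refine hwf.induction (C := fun i => ∃ P : List (Fin n), P.head? = some i ∧
    P.getLast? = some j ∧ P.Nodup ∧
    (∀ e ∈ pathEdges P, e ∈ T) ∧
    (∀ v ∈ P, v = i ∨ Relation.TransGen step i v)) i ?_ |>.imp
    (fun P hP => ⟨hP.1, hP.2.1, hP.2.2.1, hP.2.2.2.1⟩)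
  intro x ih
  by_cases hxj : x = j
  · subst hxj
    refine ⟨[x], rfl, rfl, List.nodup_singleton x, ?_, ?_⟩
    · intro e he
      simp [pathEdges] at he
    · intro v hv
      left
      simpa using hv
  · obtain ⟨y, hy, -⟩ := hT.2.1 x hxj
    have hrel1 : rel y x := Relation.TransGen.single hy
    obtain ⟨P', h1, h2, h3, h4, h5⟩ := ih y hrel1
    obtain ⟨z, t, rfl⟩ : ∃ z t, P' = z :: t := by
      cases P' with
      | nil => simp at h1
      | cons z t => exact ⟨z, t, rfl⟩
    have hz : z = y := by simpa using h1
    subst hz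
    have hnotin : x ∉ z :: t := by
      intro hmem
      rcases h5 x hmem with rfl | hgen
      · exact hT.2.2.2 x (Relation.TransGen.single hy)
      · exact hT.2.2.2 x (Relation.TransGen.head hy hgen)
    refine ⟨x :: z :: t, rfl, by rwa [List.getLast?_cons_cons], List.nodup_cons.2 ⟨hnotin, h3⟩, ?_, ?_⟩
    · intro e he
      rw [pathEdges_cons_cons] at he
      rcases List.mem_cons.1 he with rfl | he'
      · exact hy
      · exact h4 e he'
    · intro v hv
      rcases List.mem_cons.1 hv with rfl | hv'
      · exact Or.inl rfl
      · right
        rcases h5 v hv' with rfl | hgen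
        · exact Relation.TransGen.single hy
        · exact Relation.TransGen.head hy hgen

lemma two_le_length_of_ne {α : Type*} {l : List α} {i j : α} (h1 : l.head? = some i)
    (h2 : l.getLast? = some j) (hij : i ≠ j) : 2 ≤ l.length := by
  match l with
  | [] => simp at h1
  | [x] =>
    simp at h1 h2
    exact absurd (h1.symm.trans h2) hij
  | x :: y :: t => simp

lemma pathWeight_le_one {A : Matrix (Fin n) (Fin n) ℝ} (hnn : ∀ i j, 0 ≤ A i j)
    (hms : MaxStochastic A) (P : List (Fin n)) : pathWeight A P ≤ 1 := by
  refine list_prod_le_one _ ?_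
  intro x hx
  rw [List.mem_map] at hx
  obtain ⟨e, _, rfl⟩ := hx
  exact ⟨hnn e.1 e.2, entry_le_one hms e.1 e.2⟩

lemma star_le_one {A S : Matrix (Fin n) (Fin n) ℝ} (hnn : ∀ i j, 0 ≤ A i j)
    (hms : MaxStochastic A) (hS : IsKleeneStar A S) (i j : Fin n) : S i j ≤ 1 := by
  by_cases hij : i = j
  · subst hij; rw [hS.1 i]
  · rw [hS.2 i j hij]
    refine csSup_le ⟨0, Set.mem_insert _ _⟩ ?_
    rintro x (rfl | ⟨P, hP, rfl⟩)
    · norm_num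
    · exact pathWeight_le_one hnn hms P

lemma star_bddAbove {A : Matrix (Fin n) (Fin n) ℝ} (hnn : ∀ i j, 0 ≤ A i j)
    (hms : MaxStochastic A) (i j : Fin n) :
    BddAbove (insert (0:ℝ) {x | ∃ P, IsPathIn A i j P ∧ x = pathWeight A P}) := by
  refine ⟨1, ?_⟩
  rintro x (rfl | ⟨P, hP, rfl⟩)
  · norm_num
  · exact pathWeight_le_one hnn hms P

lemma pathWeight_le_star {A S : Matrix (Fin n) (Fin n) ℝ} (hnn : ∀ i j, 0 ≤ A i j)
    (hms : MaxStochastic A) (hS : IsKleeneStar A S) {i j : Fin n} (hij : i ≠ j)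
    {P : List (Fin n)} (hP : IsPathIn A i j P) : pathWeight A P ≤ S i j := by
  rw [hS.2 i j hij]
  exact le_csSup (star_bddAbove hnn hms i j) (Set.mem_insert_iff.2 (Or.inr ⟨P, hP, rfl⟩))

lemma treeWeight_le_star {A S : Matrix (Fin n) (Fin n) ℝ} (hnn : ∀ i j, 0 ≤ A i j)
    (hms : MaxStochastic A) (hS : IsKleeneStar A S) {j : Fin n}
    {T : Finset (Fin n × Fin n)} (hT : IsITree (edgeRel A) j T) (i : Fin n) :
    treeWeight A T ≤ S i j := by
  classical
  by_cases hij : i = j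
  · subst hij
    rw [hS.1 i]
    exact treeWeight_le_one hnn hms T
  · obtain ⟨P, h1, h2, h3, h4⟩ := tree_path hT i
    have hpos : ∀ e ∈ pathEdges P, 0 < A e.1 e.2 := fun e he => hT.1 e (h4 e he)
    have hpath : IsPathIn A i j P := ⟨h1, h2, two_le_length_of_ne h1 h2 hij, hpos⟩
    have hEnd : (pathEdges P).Nodup := pathEdges_nodup h3
    have hsub : (pathEdges P).toFinset ⊆ T := by
      intro e he
      exact h4 e (List.mem_toFinset.1 he)
    have hsplit : treeWeight A T =
        (∏ e ∈ T \ (pathEdges P).toFinset, A e.1 e.2) * pathWeight A P := by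
      rw [treeWeight, ← Finset.prod_sdiff hsub]
      congr 1
      exact List.prod_toFinset _ hEnd
    have hr1 : (∏ e ∈ T \ (pathEdges P).toFinset, A e.1 e.2) ≤ 1 :=
      Finset.prod_le_one (fun e _ => hnn e.1 e.2) (fun e _ => entry_le_one hms e.1 e.2)
    have hr0 : 0 ≤ (∏ e ∈ T \ (pathEdges P).toFinset, A e.1 e.2) :=
      Finset.prod_nonneg fun e _ => hnn e.1 e.2
    have hpw0 : 0 ≤ pathWeight A P :=
      List.prod_nonneg (by
        intro x hx
        rw [List.mem_map] at hx
        obtain ⟨e, _, rfl⟩ := hx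
        exact hnn e.1 e.2)
    have : treeWeight A T ≤ pathWeight A P := by
      rw [hsplit]
      nlinarith
    exact this.trans (pathWeight_le_star hnn hms hS hij hpath)

lemma not_nodup_split {α : Type*} : ∀ l : List α, ¬ l.Nodup →
    ∃ (l₁ : List α) (a : α) (l₂ l₃ : List α), l = l₁ ++ a :: (l₂ ++ a :: l₃) := by
  intro l
  induction l with
  | nil => intro h; exact absurd List.nodup_nil h
  | cons x t ih =>
    intro h
    by_cases hx : x ∈ t
    · obtain ⟨l₂, l₃, rfl⟩ := List.append_of_mem hx
      exact ⟨[], x, l₂, l₃, rfl⟩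
    · have hnt : ¬ t.Nodup := fun hnd => h (List.nodup_cons.2 ⟨hx, hnd⟩)
      obtain ⟨l₁, a, l₂, l₃, rfl⟩ := ih hnt
      exact ⟨x :: l₁, a, l₂, l₃, rfl⟩

lemma shorten_path {A : Matrix (Fin n) (Fin n) ℝ} (hnn : ∀ i j, 0 ≤ A i j)
    (hms : MaxStochastic A) {i j : Fin n} (hij : i ≠ j) :
    ∀ P : List (Fin n), IsPathIn A i j P →
      ∃ P', IsPathIn A i j P' ∧ P'.Nodup ∧ pathWeight A P ≤ pathWeight A P' := by
  suffices h : ∀ N, ∀ P : List (Fin n), P.length ≤ N → IsPathIn A i j P →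
      ∃ P', IsPathIn A i j P' ∧ P'.Nodup ∧ pathWeight A P ≤ pathWeight A P' by
    intro P hP
    exact h P.length P le_rfl hP
  intro N
  induction N with
  | zero =>
    intro P hl hP
    have := hP.2.2.1
    omega
  | succ N ih =>
    intro P hl hP
    by_cases hnd : P.Nodup
    · exact ⟨P, hP, hnd, le_rfl⟩
    · obtain ⟨l₁, a, l₂, l₃, rfl⟩ := not_nodup_split P hnd
      set P' := l₁ ++ a :: l₃ with hP'
      have hE : pathEdges (l₁ ++ a :: (l₂ ++ a :: l₃)) =
          pathEdges (l₁ ++ [a]) ++ (pathEdges ((a :: l₂) ++ [a]) ++ pathEdges (a :: l₃)) := by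
        rw [pathEdges_append l₁ a (l₂ ++ a :: l₃)]
        congr 1
        have h0 : a :: (l₂ ++ a :: l₃) = (a :: l₂) ++ a :: l₃ := by simp
        rw [h0, pathEdges_append (a :: l₂) a l₃]
      have hE' : pathEdges P' = pathEdges (l₁ ++ [a]) ++ pathEdges (a :: l₃) :=
        pathEdges_append l₁ a l₃
      have hmemP : ∀ e ∈ pathEdges P', e ∈ pathEdges (l₁ ++ a :: (l₂ ++ a :: l₃)) := by
        intro e he
        rw [hE'] at he
        rw [hE]
        rcases List.mem_append.1 he with h | h
        · exact List.mem_append.2 (Or.inl h)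
        · exact List.mem_append.2 (Or.inr (List.mem_append.2 (Or.inr h)))
      have hhead : P'.head? = (l₁ ++ a :: (l₂ ++ a :: l₃)).head? := by
        rw [hP', List.head?_append, List.head?_append]
        simp
      have hmid : (a :: (l₂ ++ a :: l₃)).getLast? = (a :: l₃).getLast? := by
        have h0 : a :: (l₂ ++ a :: l₃) = (a :: l₂) ++ a :: l₃ := by simp
        rw [h0, List.getLast?_append, List.getLast?_eq_getLast (by simp)]
        rfl
      have hlast : P'.getLast? = (l₁ ++ a :: (l₂ ++ a :: l₃)).getLast? := by
        rw [hP', List.getLast?_append, List.getLast?_append, hmid]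
      have hP'path : IsPathIn A i j P' := by
        refine ⟨?_, ?_, ?_, ?_⟩
        · rw [hhead]; exact hP.1
        · rw [hlast]; exact hP.2.1
        · exact two_le_length_of_ne (hhead.trans hP.1) (hlast.trans hP.2.1) hij
        · intro e he
          exact hP.2.2.2 e (hmemP e he)
      have hposP : ∀ e ∈ pathEdges (l₁ ++ a :: (l₂ ++ a :: l₃)), 0 < A e.1 e.2 := hP.2.2.2
      have hwle : pathWeight A (l₁ ++ a :: (l₂ ++ a :: l₃)) ≤ pathWeight A P' := by
        rw [pathWeight, pathWeight, hE, hE', List.map_append, List.map_append,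
          List.prod_append, List.prod_append, List.map_append, List.prod_append]
        set wt : Fin n × Fin n → ℝ := fun e => A e.1 e.2 with hwt
        have hW1 : 0 ≤ ((pathEdges (l₁ ++ [a])).map wt).prod :=
          List.prod_nonneg (by
            intro x hx
            rw [List.mem_map] at hx
            obtain ⟨e, _, rfl⟩ := hx
            exact hnn e.1 e.2)
        have hW3 : 0 ≤ ((pathEdges (a :: l₃)).map wt).prod :=
          List.prod_nonneg (by
            intro x hx
            rw [List.mem_map] at hx
            obtain ⟨e, _, rfl⟩ := hx
            exact hnn e.1 e.2)
        have hW2 : ((pathEdges ((a :: l₂) ++ [a])).map wt).prod ≤ 1 := by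
          refine list_prod_le_one _ ?_
          intro x hx
          rw [List.mem_map] at hx
          obtain ⟨e, _, rfl⟩ := hx
          exact ⟨hnn e.1 e.2, entry_le_one hms e.1 e.2⟩
        have hW2' : 0 ≤ ((pathEdges ((a :: l₂) ++ [a])).map wt).prod :=
          List.prod_nonneg (by
            intro x hx
            rw [List.mem_map] at hx
            obtain ⟨e, _, rfl⟩ := hx
            exact hnn e.1 e.2)
        nlinarith [mul_le_mul_of_nonneg_right hW2 hW3, hW1]
      obtain ⟨P'', h1, h2, h3⟩ := ih P' (by
        have hl1 : (l₁ ++ a :: (l₂ ++ a :: l₃)).length =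
            l₁.length + l₂.length + l₃.length + 2 := by
          simp [List.length_append]
          omega
        have hl2 : P'.length = l₁.length + l₃.length + 1 := by
          simp [hP', List.length_append]
          omega
        omega) hP'path
      exact ⟨P'', h1, h2, hwle.trans h3⟩

lemma mem_of_head?_eq {α : Type*} {l : List α} {a : α} (h : l.head? = some a) : a ∈ l := by
  cases l with
  | nil => simp at h
  | cons x t =>
    simp only [List.head?_cons, Option.some_inj] at h
    rw [← h]
    exact List.mem_cons_self

end Helpers

/-- if `A` is irreducible max-stochastic, its critical graph
`D^C(A)` has at most two strongly connected components, and `w` is the maximal RST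
vector of `A`, then `wⱼ = min_{i ∈ N^C(A)} a*_{ij}` for every critical node `j`. -/
theorem stmt_17 {n : ℕ} (A : Matrix (Fin n) (Fin n) ℝ)
    (hnn : ∀ i j, 0 ≤ A i j) (hirr : IrreducibleMat A) (hms : MaxStochastic A)
    (hcc : ∀ a b c, CriticalNode A a → CriticalNode A b → CriticalNode A c →
      SameCritComponent A a b ∨ SameCritComponent A a c ∨ SameCritComponent A b c)
    (w : Fin n → ℝ) (hw : IsMaxRSTVector A w)
    (S : Matrix (Fin n) (Fin n) ℝ) (hS : IsKleeneStar A S) :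
    ∀ j : Fin n, CriticalNode A j →
      IsLeast {x | ∃ i, CriticalNode A i ∧ x = S i j} (w j) := by
  intro j hjcrit
  classical
  obtain ⟨T₀, hT₀, hwj⟩ := (hw j).1
  have hwub : ∀ x ∈ {x | ∃ T, IsITree (edgeRel A) j T ∧ x = treeWeight A T}, x ≤ w j :=
    (hw j).2
  have hwle : ∀ i : Fin n, w j ≤ S i j := by
    intro i
    rw [hwj]
    exact treeWeight_le_star hnn hms hS hT₀ i
  have hw0 : 0 ≤ w j := by
    rw [hwj]
    exact treeWeight_nonneg hnn T₀
  have hroute_gen : ∀ (i0 : Fin n), CriticalNode A i0 → ¬ SameCritComponent A i0 j →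
      ∀ k : Fin n, Relation.ReflTransGen (fun a b => A a b = 1) k j ∨
        Relation.ReflTransGen (fun a b => A a b = 1) k i0 := by
    intro i0 hi0c hi0s k
    obtain ⟨v, hvc, hkv⟩ := reach_critical hms k
    by_cases hvj : SameCritComponent A v j
    · exact Or.inl (hkv.trans (sameCrit_one_path hms hvj.1))
    · have hvi0 : SameCritComponent A v i0 := by
        rcases hcc v i0 j hvc hi0c hjcrit with h | h | h
        · exact h
        · exact absurd h hvj
        · exact absurd h hi0s
      exact Or.inr (hkv.trans (sameCrit_one_path hms hvi0.1))
  by_cases hall : ∀ i : Fin n, CriticalNode A i → SameCritComponent A i j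
  · -- single critical class: w j = S j j = 1
    refine ⟨⟨j, hjcrit, ?_⟩, ?_⟩
    · rw [hS.1 j]
      have hle1 : w j ≤ 1 := (hwle j).trans_eq (hS.1 j)
      have hge1 : 1 ≤ w j := by
        have hroute : ∀ k : Fin n, ∃ v ∈ ([j] : List (Fin n)),
            Relation.ReflTransGen (fun a b => A a b = 1) k v := by
          intro k
          obtain ⟨v, hvc, hkv⟩ := reach_critical hms k
          exact ⟨j, List.mem_singleton_self j,
            hkv.trans (sameCrit_one_path hms (hall v hvc).1)⟩
        obtain ⟨T, hT, hTw⟩ := exists_tree_of_path A (j := j) ([j]) (List.nodup_singleton j)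
          (by simp) (by simp [pathEdges]) hroute
        have hpw : pathWeight A [j] = 1 := by simp [pathWeight, pathEdges]
        have := hwub (treeWeight A T) ⟨T, hT, rfl⟩
        rw [hTw, hpw] at this
        exact this
      linarith
    · rintro x ⟨i, hic, rfl⟩
      exact hwle i
  · push_neg at hall
    obtain ⟨i0, hi0c, hi0s⟩ := hall
    have hne : i0 ≠ j := by
      intro h
      exact hi0s (h ▸ ⟨Relation.ReflTransGen.refl, Relation.ReflTransGen.refl⟩)
    have hge : S i0 j ≤ w j := by
      rw [hS.2 i0 j hne]
      refine csSup_le ⟨0, Set.mem_insert _ _⟩ ?_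
      rintro x (rfl | ⟨P, hPp, rfl⟩)
      · exact hw0
      · obtain ⟨P', hP'p, hP'nd, hP'le⟩ := shorten_path hnn hms hne P hPp
        have hroute : ∀ k : Fin n, ∃ v ∈ P',
            Relation.ReflTransGen (fun a b => A a b = 1) k v := by
          intro k
          rcases hroute_gen i0 hi0c hi0s k with h | h
          · exact ⟨j, mem_of_getLast?_eq hP'p.2.1, h⟩
          · exact ⟨i0, mem_of_head?_eq hP'p.1, h⟩
        obtain ⟨T, hT, hTw⟩ := exists_tree_of_path A P' hP'nd hP'p.2.1 hP'p.2.2.2 hroute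
        have := hwub (treeWeight A T) ⟨T, hT, rfl⟩
        rw [hTw] at this
        linarith
    exact ⟨⟨i0, hi0c, le_antisymm (hwle i0) hge |>.symm ▸ rfl⟩, by
      rintro x ⟨i, hic, rfl⟩
      exact hwle i⟩
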